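/- arXiv:1507.07091 — 3 statements merged into one kernel-verified Lean document; each statement's English description precedes it below -/
import Mathlib

section
/- Let T, V, Y, Z be random variables on a finite probability space forming a Markov chain T → V → Y → Z. Then I(V;Y|T) − I(V;Z|T) ≤ I(V;Y|Z) ≤ H(Y|Z). -/
open Finset

def IsPMF {Ω : Type} [Fintype Ω] (μ : Ω → ℝ) : Prop :=
  (∀ ω, 0 ≤ μ ω) ∧ ∑ ω, μ ω = 1

def pOf {Ω : Type} [Fintype Ω] {α : Type} [DecidableEq α]
    (μ : Ω → ℝ) (X : Ω → α) (x : α) : ℝ :=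
  ∑ ω, if X ω = x then μ ω else 0

noncomputable def ent {Ω : Type} [Fintype Ω] {α : Type} [Fintype α] [DecidableEq α]
    (μ : Ω → ℝ) (X : Ω → α) : ℝ :=
  ∑ x, Real.negMulLog (pOf μ X x)

noncomputable def condEnt {Ω : Type} [Fintype Ω] {α β : Type}
    [Fintype α] [DecidableEq α] [Fintype β] [DecidableEq β]
    (μ : Ω → ℝ) (X : Ω → α) (Y : Ω → β) : ℝ :=
  ent μ (fun ω => (X ω, Y ω)) - ent μ Y

noncomputable def mi {Ω : Type} [Fintype Ω] {α β : Type}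
    [Fintype α] [DecidableEq α] [Fintype β] [DecidableEq β]
    (μ : Ω → ℝ) (X : Ω → α) (Y : Ω → β) : ℝ :=
  ent μ X + ent μ Y - ent μ (fun ω => (X ω, Y ω))

noncomputable def condMI {Ω : Type} [Fintype Ω] {α β γ : Type}
    [Fintype α] [DecidableEq α] [Fintype β] [DecidableEq β] [Fintype γ] [DecidableEq γ]
    (μ : Ω → ℝ) (X : Ω → α) (Y : Ω → β) (Z : Ω → γ) : ℝ :=
  ent μ (fun ω => (X ω, Z ω)) + ent μ (fun ω => (Y ω, Z ω))
    - ent μ (fun ω => (X ω, Y ω, Z ω)) - ent μ Z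

def IndepRV {Ω : Type} [Fintype Ω] {α β : Type} [DecidableEq α] [DecidableEq β]
    (μ : Ω → ℝ) (X : Ω → α) (Y : Ω → β) : Prop :=
  ∀ x y, pOf μ (fun ω => (X ω, Y ω)) (x, y) = pOf μ X x * pOf μ Y y

def CondIndepRV {Ω : Type} [Fintype Ω] {α β γ : Type}
    [DecidableEq α] [DecidableEq β] [DecidableEq γ]
    (μ : Ω → ℝ) (X : Ω → α) (Y : Ω → β) (Z : Ω → γ) : Prop :=
  ∀ x y z, pOf μ (fun ω => (X ω, Y ω, Z ω)) (x, y, z) * pOf μ Z z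
    = pOf μ (fun ω => (X ω, Z ω)) (x, z) * pOf μ (fun ω => (Y ω, Z ω)) (y, z)

def IsUniformRV {Ω : Type} [Fintype Ω] {α : Type} [Fintype α] [DecidableEq α]
    (μ : Ω → ℝ) (X : Ω → α) : Prop :=
  ∀ x, pOf μ X x = 1 / (Fintype.card α : ℝ)


set_option linter.unusedSectionVars false
set_option maxHeartbeats 1000000

section Basic
variable {Ω : Type} [Fintype Ω] {α β γ δ : Type}
  [Fintype α] [DecidableEq α] [Fintype β] [DecidableEq β]
  [Fintype γ] [DecidableEq γ] [Fintype δ] [DecidableEq δ]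
  (μ : Ω → ℝ)

variable {Ω : Type} [Fintype Ω] {α β γ δ : Type}
  [Fintype α] [DecidableEq α] [Fintype β] [DecidableEq β]
  [Fintype γ] [DecidableEq γ] [Fintype δ] [DecidableEq δ]
  (μ : Ω → ℝ)

lemma pOf_nonneg (hμ : ∀ ω, 0 ≤ μ ω) (X : Ω → α) (x : α) : 0 ≤ pOf μ X x := by
  refine Finset.sum_nonneg fun ω _ => ?_
  split <;> simp [hμ ω]

lemma ent_comp_inj (X : Ω → α) (f : α → β) (hf : Function.Injective f) :
    ent μ (fun ω => f (X ω)) = ent μ X := by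
  have h1 : ∀ x, pOf μ (fun ω => f (X ω)) (f x) = pOf μ X x := by
    intro x
    refine Finset.sum_congr rfl fun ω _ => ?_
    simp [hf.eq_iff]
  have h2 : ∀ b ∉ Finset.univ.image f, pOf μ (fun ω => f (X ω)) b = 0 := by
    intro b hb
    refine Finset.sum_eq_zero fun ω _ => ?_
    have : f (X ω) ≠ b := fun h => hb (Finset.mem_image.2 ⟨X ω, Finset.mem_univ _, h⟩)
    simp [this]
  unfold ent
  rw [← Finset.sum_subset (Finset.subset_univ (Finset.univ.image f))
    (fun b _ hb => by rw [h2 b hb, Real.negMulLog_zero])]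
  rw [Finset.sum_image (fun x _ y _ h => hf h)]
  exact Finset.sum_congr rfl fun x _ => by rw [h1]

lemma pOf_marg_right (X : Ω → α) (B : Ω → β) (x : α) :
    pOf μ X x = ∑ b, pOf μ (fun ω => (X ω, B ω)) (x, b) := by
  unfold pOf
  rw [Finset.sum_comm]
  refine Finset.sum_congr rfl fun ω _ => ?_
  by_cases h : X ω = x <;> simp [h, Prod.ext_iff]

lemma pOf_marg₁ (X : Ω → α) (Y : Ω → β) (Z : Ω → γ) (x : α) (z : γ) :
    pOf μ (fun ω => (X ω, Z ω)) (x, z) = ∑ y, pOf μ (fun ω => (X ω, Y ω, Z ω)) (x, y, z) := by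
  unfold pOf
  rw [Finset.sum_comm]
  refine Finset.sum_congr rfl fun ω _ => ?_
  by_cases h1 : X ω = x <;> by_cases h2 : Z ω = z <;> simp [h1, h2, Prod.ext_iff]

lemma pOf_marg₂ (X : Ω → α) (Y : Ω → β) (Z : Ω → γ) (y : β) (z : γ) :
    pOf μ (fun ω => (Y ω, Z ω)) (y, z) = ∑ x, pOf μ (fun ω => (X ω, Y ω, Z ω)) (x, y, z) := by
  unfold pOf
  rw [Finset.sum_comm]
  refine Finset.sum_congr rfl fun ω _ => ?_
  by_cases h1 : Y ω = y <;> by_cases h2 : Z ω = z <;> simp [h1, h2, Prod.ext_iff]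

lemma pOf_marg_left (Y : Ω → β) (Z : Ω → γ) (z : γ) :
    pOf μ Z z = ∑ y, pOf μ (fun ω => (Y ω, Z ω)) (y, z) := by
  unfold pOf
  rw [Finset.sum_comm]
  refine Finset.sum_congr rfl fun ω _ => ?_
  by_cases h : Z ω = z <;> simp [h, Prod.ext_iff]

lemma pOf_marg₃ (X : Ω → α) (Y : Ω → β) (Z : Ω → γ) (z : γ) :
    pOf μ Z z = ∑ x, ∑ y, pOf μ (fun ω => (X ω, Y ω, Z ω)) (x, y, z) := by
  rw [pOf_marg_left μ Y Z z, Finset.sum_comm]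
  exact Finset.sum_congr rfl fun y _ => pOf_marg₂ μ X Y Z y z


lemma ent_congr (X1 : Ω → α) (X2 : Ω → β) (f : α → β) (hf : Function.Injective f)
    (hcomp : ∀ ω, f (X1 ω) = X2 ω) : ent μ X2 = ent μ X1 := by
  have h := ent_comp_inj μ X1 f hf
  rw [← h]
  congr 1
  funext ω
  exact (hcomp ω).symm

end Basic


-- pointwise bound: a*log a + a*log d - a*log b - a*log c ≥ a - b*c/d
lemma term_ge {a b c d : ℝ} (ha : 0 ≤ a) (hab : a ≤ b) (hac : a ≤ c) (had : a ≤ d) :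
    a - b * c / d ≤ a * Real.log a + a * Real.log d - a * Real.log b - a * Real.log c := by
  rcases eq_or_lt_of_le ha with h0 | hpos
  · have hb : 0 ≤ b := h0 ▸ hab
    have hc : 0 ≤ c := h0 ▸ hac
    have hd : 0 ≤ d := h0 ▸ had
    have : 0 ≤ b * c / d := by positivity
    simp [← h0]
    linarith
  · have hb : 0 < b := lt_of_lt_of_le hpos hab
    have hc : 0 < c := lt_of_lt_of_le hpos hac
    have hd : 0 < d := lt_of_lt_of_le hpos had
    set A := b * c / d with hA
    have hApos : 0 < A := by positivity
    have hlog : Real.log (A / a) ≤ A / a - 1 := Real.log_le_sub_one_of_pos (by positivity)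
    have e1 : Real.log (A / a) = Real.log b + Real.log c - Real.log d - Real.log a := by
      rw [hA, Real.log_div (by positivity) (ne_of_gt hpos), Real.log_div (by positivity) (ne_of_gt hd),
        Real.log_mul (ne_of_gt hb) (ne_of_gt hc)]
      try ring
    have h3 : a * Real.log (A / a) ≤ A - a := by
      have h4 := mul_le_mul_of_nonneg_left hlog hpos.le
      have h5 : a * (A / a) = A := by field_simp
      nlinarith
    have e1' : a * Real.log (A / a)
        = a * Real.log b + a * Real.log c - a * Real.log d - a * Real.log a := by
      rw [e1]; ring
    linarith

lemma term_eq_zero {a b c d : ℝ} (ha : 0 ≤ a) (hab : a ≤ b) (hac : a ≤ c) (had : a ≤ d)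
    (hfact : a * d = b * c) :
    a * Real.log a + a * Real.log d - a * Real.log b - a * Real.log c = 0 := by
  rcases eq_or_lt_of_le ha with h0 | hpos
  · simp [← h0]
  · have hb : 0 < b := lt_of_lt_of_le hpos hab
    have hc : 0 < c := lt_of_lt_of_le hpos hac
    have hd : 0 < d := lt_of_lt_of_le hpos had
    have : Real.log a + Real.log d = Real.log b + Real.log c := by
      rw [← Real.log_mul (ne_of_gt hpos) (ne_of_gt hd), ← Real.log_mul (ne_of_gt hb) (ne_of_gt hc), hfact]
    nlinarith [this]


lemma sum_rot {𝓧 𝓨 𝓩 M : Type} [Fintype 𝓧] [Fintype 𝓨] [Fintype 𝓩] [AddCommMonoid M]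
    (f : 𝓧 → 𝓨 → 𝓩 → M) :
    ∑ x, ∑ y, ∑ z, f x y z = ∑ z, ∑ x, ∑ y, f x y z :=
  calc ∑ x, ∑ y, ∑ z, f x y z
      = ∑ x, ∑ z, ∑ y, f x y z := Finset.sum_congr rfl fun x _ => Finset.sum_comm
    _ = ∑ z, ∑ x, ∑ y, f x y z := Finset.sum_comm

variable {𝓧 𝓨 𝓩 : Type} [Fintype 𝓧] [Fintype 𝓨] [Fintype 𝓩]

lemma abstract_identity (q : 𝓧 → 𝓨 → 𝓩 → ℝ) :
    (∑ x, ∑ z, Real.negMulLog (∑ y, q x y z))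
      + (∑ y, ∑ z, Real.negMulLog (∑ x, q x y z))
      - (∑ x, ∑ y, ∑ z, Real.negMulLog (q x y z))
      - (∑ z, Real.negMulLog (∑ x, ∑ y, q x y z))
    = ∑ x, ∑ y, ∑ z, (q x y z * Real.log (q x y z)
        + q x y z * Real.log (∑ x', ∑ y', q x' y' z)
        - q x y z * Real.log (∑ y', q x y' z)
        - q x y z * Real.log (∑ x', q x' y z)) := by
  have A1 : (∑ x, ∑ z, Real.negMulLog (∑ y, q x y z))
      = -∑ x, ∑ y, ∑ z, q x y z * Real.log (∑ y', q x y' z) := by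
    rw [← Finset.sum_neg_distrib]
    refine Finset.sum_congr rfl fun x _ => ?_
    calc ∑ z, Real.negMulLog (∑ y, q x y z)
        = ∑ z, -(∑ y, q x y z * Real.log (∑ y', q x y' z)) := by
          refine Finset.sum_congr rfl fun z _ => ?_
          rw [Real.negMulLog, neg_mul, Finset.sum_mul]
      _ = -∑ z, ∑ y, q x y z * Real.log (∑ y', q x y' z) := by
          rw [Finset.sum_neg_distrib]
      _ = -∑ y, ∑ z, q x y z * Real.log (∑ y', q x y' z) := by
          rw [Finset.sum_comm]
  have A2 : (∑ y, ∑ z, Real.negMulLog (∑ x, q x y z))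
      = -∑ x, ∑ y, ∑ z, q x y z * Real.log (∑ x', q x' y z) := by
    calc (∑ y, ∑ z, Real.negMulLog (∑ x, q x y z))
        = ∑ y, ∑ z, -(∑ x, q x y z * Real.log (∑ x', q x' y z)) := by
          refine Finset.sum_congr rfl fun y _ => Finset.sum_congr rfl fun z _ => ?_
          rw [Real.negMulLog, neg_mul, Finset.sum_mul]
      _ = -∑ y, ∑ z, ∑ x, q x y z * Real.log (∑ x', q x' y z) := by
          simp [Finset.sum_neg_distrib]
      _ = -∑ y, ∑ x, ∑ z, q x y z * Real.log (∑ x', q x' y z) := by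
          rw [show (∑ y, ∑ z, ∑ x, q x y z * Real.log (∑ x', q x' y z))
              = ∑ y, ∑ x, ∑ z, q x y z * Real.log (∑ x', q x' y z) from
            Finset.sum_congr rfl fun y _ => Finset.sum_comm]
      _ = -∑ x, ∑ y, ∑ z, q x y z * Real.log (∑ x', q x' y z) := by
          rw [Finset.sum_comm]
  have A3 : (∑ x, ∑ y, ∑ z, Real.negMulLog (q x y z))
      = -∑ x, ∑ y, ∑ z, q x y z * Real.log (q x y z) := by
    simp [Real.negMulLog, Finset.sum_neg_distrib]
  have A4 : (∑ z, Real.negMulLog (∑ x, ∑ y, q x y z))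
      = -∑ x, ∑ y, ∑ z, q x y z * Real.log (∑ x', ∑ y', q x' y' z) := by
    calc (∑ z, Real.negMulLog (∑ x, ∑ y, q x y z))
        = ∑ z, -(∑ x, ∑ y, q x y z * Real.log (∑ x', ∑ y', q x' y' z)) := by
          refine Finset.sum_congr rfl fun z _ => ?_
          rw [Real.negMulLog, neg_mul, Finset.sum_mul]
          simp [Finset.sum_mul]
      _ = -∑ z, ∑ x, ∑ y, q x y z * Real.log (∑ x', ∑ y', q x' y' z) := by
          rw [Finset.sum_neg_distrib]
      _ = -∑ x, ∑ z, ∑ y, q x y z * Real.log (∑ x', ∑ y', q x' y' z) := by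
          rw [Finset.sum_comm]
      _ = -∑ x, ∑ y, ∑ z, q x y z * Real.log (∑ x', ∑ y', q x' y' z) := by
          rw [show (∑ x, ∑ z, ∑ y, q x y z * Real.log (∑ x', ∑ y', q x' y' z))
              = ∑ x, ∑ y, ∑ z, q x y z * Real.log (∑ x', ∑ y', q x' y' z) from
            Finset.sum_congr rfl fun x _ => Finset.sum_comm]
  rw [A1, A2, A3, A4]
  simp only [Finset.sum_add_distrib, Finset.sum_sub_distrib]
  ring

lemma abstract_nonneg (q : 𝓧 → 𝓨 → 𝓩 → ℝ) (hq : ∀ x y z, 0 ≤ q x y z) :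
    0 ≤ (∑ x, ∑ z, Real.negMulLog (∑ y, q x y z))
      + (∑ y, ∑ z, Real.negMulLog (∑ x, q x y z))
      - (∑ x, ∑ y, ∑ z, Real.negMulLog (q x y z))
      - (∑ z, Real.negMulLog (∑ x, ∑ y, q x y z)) := by
  rw [abstract_identity]
  have hab : ∀ x y z, q x y z ≤ ∑ y', q x y' z := fun x y z =>
    Finset.single_le_sum (fun y' _ => hq x y' z) (Finset.mem_univ y)
  have hac : ∀ x y z, q x y z ≤ ∑ x', q x' y z := fun x y z =>
    Finset.single_le_sum (fun x' _ => hq x' y z) (Finset.mem_univ x)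
  have had : ∀ x y z, q x y z ≤ ∑ x', ∑ y', q x' y' z := fun x y z =>
    le_trans (hab x y z) (Finset.single_le_sum
      (fun x' _ => Finset.sum_nonneg fun y' _ => hq x' y' z) (Finset.mem_univ x))
  have step1 : (∑ x, ∑ y, ∑ z, (q x y z
        - (∑ y', q x y' z) * (∑ x', q x' y z) / (∑ x', ∑ y', q x' y' z)))
      ≤ ∑ x, ∑ y, ∑ z, (q x y z * Real.log (q x y z)
        + q x y z * Real.log (∑ x', ∑ y', q x' y' z)
        - q x y z * Real.log (∑ y', q x y' z)
        - q x y z * Real.log (∑ x', q x' y z)) := by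
    refine Finset.sum_le_sum fun x _ => Finset.sum_le_sum fun y _ => Finset.sum_le_sum fun z _ => ?_
    exact term_ge (hq x y z) (hab x y z) (hac x y z) (had x y z)
  refine le_trans ?_ step1
  rw [show (∑ x, ∑ y, ∑ z, (q x y z
        - (∑ y', q x y' z) * (∑ x', q x' y z) / (∑ x', ∑ y', q x' y' z)))
      = (∑ x, ∑ y, ∑ z, q x y z)
        - ∑ x, ∑ y, ∑ z, (∑ y', q x y' z) * (∑ x', q x' y z) / (∑ x', ∑ y', q x' y' z) from by
    simp [Finset.sum_sub_distrib]]
  rw [sub_nonneg]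
  have hq' : (∑ x, ∑ y, ∑ z, q x y z) = ∑ z, ∑ x, ∑ y, q x y z := sum_rot _
  have hA' : (∑ x, ∑ y, ∑ z, (∑ y', q x y' z) * (∑ x', q x' y z) / (∑ x', ∑ y', q x' y' z))
      = ∑ z, ∑ x, ∑ y, (∑ y', q x y' z) * (∑ x', q x' y z) / (∑ x', ∑ y', q x' y' z) := sum_rot _
  rw [hq', hA']
  refine Finset.sum_le_sum fun z _ => ?_
  by_cases hz : (∑ x, ∑ y, q x y z) = 0
  · have hxz : ∀ x, (∑ y, q x y z) = 0 := by
      intro x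
      have := (Finset.sum_eq_zero_iff_of_nonneg
        (fun x' (_ : x' ∈ Finset.univ) => Finset.sum_nonneg fun y' _ => hq x' y' z)).1 hz
      exact this x (Finset.mem_univ x)
    have : ∀ x, ∑ y, (∑ y', q x y' z) * (∑ x', q x' y z) / (∑ x', ∑ y', q x' y' z) = 0 := by
      intro x
      refine Finset.sum_eq_zero fun y _ => ?_
      rw [hxz x]
      simp
    rw [Finset.sum_congr rfl fun x _ => this x]
    simp [hz]
  · have hcol : ∀ x, ∑ y, (∑ y', q x y' z) * (∑ x', q x' y z) / (∑ x', ∑ y', q x' y' z)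
        = ∑ y', q x y' z := by
      intro x
      rw [← Finset.sum_div, ← Finset.mul_sum]
      rw [show (∑ y, ∑ x', q x' y z) = ∑ x', ∑ y, q x' y z from Finset.sum_comm]
      rw [mul_div_assoc, div_self hz, mul_one]
    rw [Finset.sum_congr rfl fun x _ => hcol x]

lemma abstract_eq_zero (q : 𝓧 → 𝓨 → 𝓩 → ℝ) (hq : ∀ x y z, 0 ≤ q x y z)
    (hfact : ∀ x y z, q x y z * (∑ x', ∑ y', q x' y' z)
      = (∑ y', q x y' z) * (∑ x', q x' y z)) :
    (∑ x, ∑ z, Real.negMulLog (∑ y, q x y z))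
      + (∑ y, ∑ z, Real.negMulLog (∑ x, q x y z))
      - (∑ x, ∑ y, ∑ z, Real.negMulLog (q x y z))
      - (∑ z, Real.negMulLog (∑ x, ∑ y, q x y z)) = 0 := by
  rw [abstract_identity]
  refine Finset.sum_eq_zero fun x _ => Finset.sum_eq_zero fun y _ => Finset.sum_eq_zero fun z _ => ?_
  have hab : q x y z ≤ ∑ y', q x y' z :=
    Finset.single_le_sum (fun y' _ => hq x y' z) (Finset.mem_univ y)
  have hac : q x y z ≤ ∑ x', q x' y z :=
    Finset.single_le_sum (fun x' _ => hq x' y z) (Finset.mem_univ x)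
  have had : q x y z ≤ ∑ x', ∑ y', q x' y' z :=
    le_trans hab (Finset.single_le_sum
      (fun x' _ => Finset.sum_nonneg fun y' _ => hq x' y' z) (Finset.mem_univ x))
  exact term_eq_zero (hq x y z) hab hac had (hfact x y z)


section CondMI
variable {Ω : Type} [Fintype Ω] {α β γ δ α' β' γ' : Type}
  [Fintype α] [DecidableEq α] [Fintype β] [DecidableEq β]
  [Fintype γ] [DecidableEq γ] [Fintype δ] [DecidableEq δ]
  [Fintype α'] [DecidableEq α'] [Fintype β'] [DecidableEq β']
  [Fintype γ'] [DecidableEq γ']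
  (μ : Ω → ℝ)

lemma condMI_eq (X : Ω → α) (Y : Ω → β) (Z : Ω → γ) :
    condMI μ X Y Z =
      (∑ x, ∑ z, Real.negMulLog (∑ y, pOf μ (fun ω => (X ω, Y ω, Z ω)) (x, y, z)))
      + (∑ y, ∑ z, Real.negMulLog (∑ x, pOf μ (fun ω => (X ω, Y ω, Z ω)) (x, y, z)))
      - (∑ x, ∑ y, ∑ z, Real.negMulLog (pOf μ (fun ω => (X ω, Y ω, Z ω)) (x, y, z)))
      - (∑ z, Real.negMulLog (∑ x, ∑ y, pOf μ (fun ω => (X ω, Y ω, Z ω)) (x, y, z))) := by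
  unfold condMI ent
  simp only [Fintype.sum_prod_type]
  simp only [pOf_marg₁ μ X Y Z, pOf_marg₂ μ X Y Z, pOf_marg₃ μ X Y Z]

lemma condMI_nonneg (hμ : ∀ ω, 0 ≤ μ ω) (X : Ω → α) (Y : Ω → β) (Z : Ω → γ) :
    0 ≤ condMI μ X Y Z := by
  rw [condMI_eq]
  exact abstract_nonneg _ (fun x y z => pOf_nonneg μ hμ _ _)

lemma condMI_eq_zero (hμ : ∀ ω, 0 ≤ μ ω) (X : Ω → α) (Y : Ω → β) (Z : Ω → γ)
    (h : CondIndepRV μ X Y Z) : condMI μ X Y Z = 0 := by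
  rw [condMI_eq]
  refine abstract_eq_zero _ (fun x y z => pOf_nonneg μ hμ _ _) fun x y z => ?_
  have h' := h x y z
  rw [pOf_marg₃ μ X Y Z z, pOf_marg₁ μ X Y Z x z, pOf_marg₂ μ X Y Z y z] at h'
  exact h'

lemma condMI_comm (X : Ω → α) (Y : Ω → β) (Z : Ω → γ) :
    condMI μ X Y Z = condMI μ Y X Z := by
  have h : ent μ (fun ω => (X ω, Y ω, Z ω)) = ent μ (fun ω => (Y ω, X ω, Z ω)) := by
    refine ent_congr μ _ _ (fun p => (p.2.1, p.1, p.2.2)) ?_ (fun ω => rfl)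
    rintro ⟨a, b, c⟩ ⟨d, e, g⟩ h
    simp only [Prod.mk.injEq] at h ⊢
    tauto
  unfold condMI
  rw [h]
  ring

lemma condMI_congr₂ (X : Ω → α) (Y1 : Ω → β) (Y2 : Ω → β') (Z : Ω → γ)
    (f : β → β') (hf : Function.Injective f) (hcomp : ∀ ω, f (Y1 ω) = Y2 ω) :
    condMI μ X Y2 Z = condMI μ X Y1 Z := by
  have h1 : ent μ (fun ω => (Y2 ω, Z ω)) = ent μ (fun ω => (Y1 ω, Z ω)) := by
    refine ent_congr μ _ _ (fun p => (f p.1, p.2)) ?_ (fun ω => by simp [hcomp ω])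
    rintro ⟨a, b⟩ ⟨c, d⟩ h
    simp only [Prod.mk.injEq] at h ⊢
    exact ⟨hf h.1, h.2⟩
  have h2 : ent μ (fun ω => (X ω, Y2 ω, Z ω)) = ent μ (fun ω => (X ω, Y1 ω, Z ω)) := by
    refine ent_congr μ _ _ (fun p => (p.1, f p.2.1, p.2.2)) ?_ (fun ω => by simp [hcomp ω])
    rintro ⟨a, b, c⟩ ⟨d, e, g⟩ h
    simp only [Prod.mk.injEq] at h ⊢
    exact ⟨h.1, hf h.2.1, h.2.2⟩
  unfold condMI
  rw [h1, h2]

lemma condMI_congr₃ (X : Ω → α) (Y : Ω → β) (Z1 : Ω → γ) (Z2 : Ω → γ')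
    (f : γ → γ') (hf : Function.Injective f) (hcomp : ∀ ω, f (Z1 ω) = Z2 ω) :
    condMI μ X Y Z2 = condMI μ X Y Z1 := by
  have h1 : ent μ (fun ω => (X ω, Z2 ω)) = ent μ (fun ω => (X ω, Z1 ω)) := by
    refine ent_congr μ _ _ (fun p => (p.1, f p.2)) ?_ (fun ω => by simp [hcomp ω])
    rintro ⟨a, b⟩ ⟨c, d⟩ h
    simp only [Prod.mk.injEq] at h ⊢
    exact ⟨h.1, hf h.2⟩
  have h2 : ent μ (fun ω => (Y ω, Z2 ω)) = ent μ (fun ω => (Y ω, Z1 ω)) := by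
    refine ent_congr μ _ _ (fun p => (p.1, f p.2)) ?_ (fun ω => by simp [hcomp ω])
    rintro ⟨a, b⟩ ⟨c, d⟩ h
    simp only [Prod.mk.injEq] at h ⊢
    exact ⟨h.1, hf h.2⟩
  have h3 : ent μ (fun ω => (X ω, Y ω, Z2 ω)) = ent μ (fun ω => (X ω, Y ω, Z1 ω)) := by
    refine ent_congr μ _ _ (fun p => (p.1, p.2.1, f p.2.2)) ?_ (fun ω => by simp [hcomp ω])
    rintro ⟨a, b, c⟩ ⟨d, e, g⟩ h
    simp only [Prod.mk.injEq] at h ⊢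
    exact ⟨h.1, h.2.1, hf h.2.2⟩
  have h4 : ent μ Z2 = ent μ Z1 := ent_congr μ _ _ f hf hcomp
  unfold condMI
  rw [h1, h2, h3, h4]

lemma condMI_chain (A : Ω → α) (B : Ω → β) (C : Ω → γ) (W : Ω → δ) :
    condMI μ A (fun ω => (B ω, C ω)) W
      = condMI μ A C W + condMI μ A B (fun ω => (C ω, W ω)) := by
  have h1 : ent μ (fun ω => ((B ω, C ω), W ω)) = ent μ (fun ω => (B ω, C ω, W ω)) := by
    refine ent_congr μ _ _ (fun p => ((p.1, p.2.1), p.2.2)) ?_ (fun ω => rfl)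
    rintro ⟨a, b, c⟩ ⟨d, e, g⟩ h
    simp only [Prod.mk.injEq] at h ⊢
    tauto
  have h2 : ent μ (fun ω => (A ω, (B ω, C ω), W ω))
      = ent μ (fun ω => (A ω, B ω, C ω, W ω)) := by
    refine ent_congr μ _ _ (fun p => (p.1, (p.2.1, p.2.2.1), p.2.2.2)) ?_ (fun ω => rfl)
    rintro ⟨a, b, c, d⟩ ⟨a', b', c', d'⟩ h
    simp only [Prod.mk.injEq] at h ⊢
    tauto
  unfold condMI
  rw [h1, h2]
  ring

lemma negMulLog_sum_le {ι : Type} [Fintype ι] (f : ι → ℝ) (hf : ∀ i, 0 ≤ f i) :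
    Real.negMulLog (∑ i, f i) ≤ ∑ i, Real.negMulLog (f i) := by
  have hS : ∀ i, f i ≤ ∑ j, f j := fun i =>
    Finset.single_le_sum (fun j _ => hf j) (Finset.mem_univ i)
  calc Real.negMulLog (∑ i, f i)
      = ∑ i, -(f i * Real.log (∑ j, f j)) := by
        rw [Real.negMulLog, neg_mul, Finset.sum_mul, ← Finset.sum_neg_distrib]
    _ ≤ ∑ i, Real.negMulLog (f i) := by
        refine Finset.sum_le_sum fun i _ => ?_
        rw [Real.negMulLog, neg_mul, neg_le_neg_iff]
        rcases eq_or_lt_of_le (hf i) with h0 | hpos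
        · simp [← h0]
        · exact mul_le_mul_of_nonneg_left (Real.log_le_log hpos (hS i)) (hf i)

lemma ent_le_ent_pair (hμ : ∀ ω, 0 ≤ μ ω) (X : Ω → α) (B : Ω → β) :
    ent μ X ≤ ent μ (fun ω => (X ω, B ω)) := by
  unfold ent
  simp only [Fintype.sum_prod_type]
  refine Finset.sum_le_sum fun x _ => ?_
  rw [pOf_marg_right μ X B x]
  exact negMulLog_sum_le _ (fun b => pOf_nonneg μ hμ _ _)

end CondMI

/-- Under the Markov chain `T → V → Y → Z`:
`I(V;Y|T) − I(V;Z|T) ≤ I(V;Y|Z) ≤ H(Y|Z)`. -/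
theorem markov_chain_key_bound {Ω : Type} [Fintype Ω] {𝓣 𝓥 𝓨 𝓩 : Type}
    [Fintype 𝓣] [DecidableEq 𝓣] [Fintype 𝓥] [DecidableEq 𝓥]
    [Fintype 𝓨] [DecidableEq 𝓨] [Fintype 𝓩] [DecidableEq 𝓩]
    (μ : Ω → ℝ) (hμ : IsPMF μ)
    (T : Ω → 𝓣) (V : Ω → 𝓥) (Y : Ω → 𝓨) (Z : Ω → 𝓩)
    (hM1 : CondIndepRV μ T (fun ω => (Y ω, Z ω)) V)
    (hM2 : CondIndepRV μ (fun ω => (T ω, V ω)) Z Y) :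
    condMI μ V Y T - condMI μ V Z T ≤ condMI μ V Y Z ∧
    condMI μ V Y Z ≤ condEnt μ Y Z := by
  obtain ⟨hpos, -⟩ := hμ
  constructor
  · -- part (a)
    have e1 := condMI_chain μ V Y Z T
    have e2 := condMI_chain μ V Z Y T
    have e3 : condMI μ V (fun ω => (Y ω, Z ω)) T = condMI μ V (fun ω => (Z ω, Y ω)) T := by
      refine condMI_congr₂ μ V _ _ T (fun p => (p.2, p.1)) ?_ (fun ω => rfl)
      rintro ⟨a, b⟩ ⟨c, d⟩ h
      simp only [Prod.mk.injEq] at h ⊢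
      tauto
    have n1 : 0 ≤ condMI μ V Z (fun ω => (Y ω, T ω)) := condMI_nonneg μ hpos _ _ _
    have e4 : condMI μ V Y (fun ω => (Z ω, T ω)) = condMI μ V Y (fun ω => (T ω, Z ω)) := by
      refine condMI_congr₃ μ V Y _ _ (fun p => (p.2, p.1)) ?_ (fun ω => rfl)
      rintro ⟨a, b⟩ ⟨c, d⟩ h
      simp only [Prod.mk.injEq] at h ⊢
      tauto
    have e5 := condMI_chain μ Y V T Z
    have e6 : condMI μ Y V (fun ω => (T ω, Z ω)) = condMI μ V Y (fun ω => (T ω, Z ω)) :=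
      condMI_comm μ Y V _
    have n2 : 0 ≤ condMI μ Y T Z := condMI_nonneg μ hpos _ _ _
    have e7 : condMI μ Y (fun ω => (V ω, T ω)) Z = condMI μ Y (fun ω => (T ω, V ω)) Z := by
      refine condMI_congr₂ μ Y _ _ Z (fun p => (p.2, p.1)) ?_ (fun ω => rfl)
      rintro ⟨a, b⟩ ⟨c, d⟩ h
      simp only [Prod.mk.injEq] at h ⊢
      tauto
    have e8 := condMI_chain μ Y T V Z
    have e9 : condMI μ Y V Z = condMI μ V Y Z := condMI_comm μ Y V Z
    have e10 : condMI μ Y T (fun ω => (V ω, Z ω)) = condMI μ T Y (fun ω => (V ω, Z ω)) :=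
      condMI_comm μ Y T _
    have e10b : condMI μ T Y (fun ω => (V ω, Z ω)) = condMI μ T Y (fun ω => (Z ω, V ω)) := by
      refine condMI_congr₃ μ T Y _ _ (fun p => (p.2, p.1)) ?_ (fun ω => rfl)
      rintro ⟨a, b⟩ ⟨c, d⟩ h
      simp only [Prod.mk.injEq] at h ⊢
      tauto
    have e11 := condMI_chain μ T Y Z V
    have e12 : condMI μ T (fun ω => (Y ω, Z ω)) V = 0 :=
      condMI_eq_zero μ hpos _ _ _ hM1
    have n3 : 0 ≤ condMI μ T Z V := condMI_nonneg μ hpos _ _ _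
    linarith
  · -- part (b)
    have h : ent μ (fun ω => (V ω, Y ω, Z ω)) = ent μ (fun ω => ((V ω, Z ω), Y ω)) := by
      refine ent_congr μ (fun ω => ((V ω, Z ω), Y ω)) (fun ω => (V ω, Y ω, Z ω))
        (fun p => (p.1.1, p.2, p.1.2)) ?_ (fun ω => rfl)
      rintro ⟨⟨a, b⟩, c⟩ ⟨⟨d, e⟩, g⟩ hp
      simp only [Prod.mk.injEq] at hp ⊢
      tauto
    have h2 : ent μ (fun ω => (V ω, Z ω)) ≤ ent μ (fun ω => ((V ω, Z ω), Y ω)) :=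
      ent_le_ent_pair μ hpos _ _
    unfold condMI condEnt
    rw [h]
    linarith
end

section
/- Let ν_1, …, ν_S be i.i.d. Bernoulli(γ) random variables with S ≥ 1 and γ ∈ (0,1]. Define Υ = ν_1 / (1 + ∑_{i=2}^{S} ν_i) + (1/S) · ∏_{i=1}^{S} (1 − ν_i). Then E[Υ] = 1/S. -/
open Finset

lemma sum_comp_eq {Ω : Type} [Fintype Ω] {α : Type} [Fintype α] [DecidableEq α]
    (μ : Ω → ℝ) (g : Ω → α) (F : α → ℝ) :
    ∑ ω, μ ω * F (g ω) = ∑ a, (∑ ω, if g ω = a then μ ω else 0) * F a := by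
  simp_rw [Finset.sum_mul, ite_mul, zero_mul]
  rw [Finset.sum_comm]
  refine Finset.sum_congr rfl fun ω _ => ?_
  simp

lemma pointwise_sum {S : ℕ} (b : Fin S → Bool) :
    ∑ j, (if b j then (1:ℝ) else 0) / (∑ i, (if b i then (1:ℝ) else 0))
      = 1 - ∏ i, (1 - (if b i then (1:ℝ) else 0)) := by
  by_cases h : ∃ j, b j = true
  · obtain ⟨j, hj⟩ := h
    have hpos : (0:ℝ) < ∑ i, (if b i then (1:ℝ) else 0) := by
      have := Finset.single_le_sum (f := fun i => (if b i then (1:ℝ) else 0))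
        (fun i _ => by positivity) (Finset.mem_univ j)
      simp only [hj, if_true] at this
      linarith
    rw [← Finset.sum_div, div_self (ne_of_gt hpos)]
    have : ∏ i, (1 - (if b i then (1:ℝ) else 0)) = 0 :=
      Finset.prod_eq_zero (Finset.mem_univ j) (by simp [hj])
    rw [this]; ring
  · push_neg at h
    simp [Bool.not_eq_true] at h
    simp [h]

/-- For i.i.d. Bernoulli(γ) variables `ν₁,…,ν_S` (`S ≥ 1`, `γ ∈ (0,1]`), with
`Υ = ν₁/(1 + ∑_{i=2}^S νᵢ) + (1/S)·∏ᵢ (1−νᵢ)`, one has `E[Υ] = 1/S`. -/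
theorem expected_index_probability {Ω : Type} [Fintype Ω] (μ : Ω → ℝ) (hμ : IsPMF μ)
    (S : ℕ) (hS : 0 < S) (γ : ℝ) (hγ0 : 0 < γ) (hγ1 : γ ≤ 1)
    (ν : Fin S → Ω → Bool)
    (hiid : ∀ b : Fin S → Bool,
      pOf μ (fun ω => fun i => ν i ω) b = ∏ i, (if b i then γ else 1 - γ)) :
    ∑ ω, μ ω *
        ((if ν ⟨0, hS⟩ ω then (1 : ℝ) else 0)
            / (1 + ∑ i ∈ Finset.univ.erase ⟨0, hS⟩, (if ν i ω then (1 : ℝ) else 0))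
          + (1 / (S : ℝ)) * ∏ i, (1 - (if ν i ω then (1 : ℝ) else 0)))
      = 1 / (S : ℝ) := by
  classical
  set z : Fin S := ⟨0, hS⟩ with hz
  set w : (Fin S → Bool) → ℝ := fun b => ∏ i, (if b i then γ else 1 - γ) with hw
  set n : (Fin S → Bool) → ℝ := fun b => ∑ i, (if b i then (1:ℝ) else 0) with hn
  set P : (Fin S → Bool) → ℝ := fun b => ∏ i, (1 - (if b i then (1:ℝ) else 0)) with hP
  set F : (Fin S → Bool) → ℝ := fun b =>
    (if b z then (1:ℝ) else 0) / (1 + ∑ i ∈ Finset.univ.erase z, (if b i then (1:ℝ) else 0))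
      + (1 / (S : ℝ)) * P b with hF
  show ∑ ω, μ ω * F (fun i => ν i ω) = 1 / (S : ℝ)
  rw [sum_comp_eq μ (fun ω => fun i => ν i ω) F]
  have step2 : ∀ b : Fin S → Bool,
      (∑ ω, if (fun i => ν i ω) = b then μ ω else 0) = w b := fun b => hiid b
  simp_rw [step2]
  -- rewrite first term denominator
  have hfirst : ∀ b, F b = (if b z then (1:ℝ) else 0) / n b + (1 / (S : ℝ)) * P b := by
    intro b
    by_cases h : b z
    · show (if b z then (1:ℝ) else 0) / (1 + ∑ i ∈ Finset.univ.erase z, (if b i then (1:ℝ) else 0))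
          + (1 / (S : ℝ)) * P b
        = (if b z then (1:ℝ) else 0) / (∑ i, (if b i then (1:ℝ) else 0)) + (1 / (S : ℝ)) * P b
      have : (∑ i, (if b i then (1:ℝ) else 0))
          = 1 + ∑ i ∈ Finset.univ.erase z, (if b i then (1:ℝ) else 0) := by
        rw [← Finset.add_sum_erase _ _ (Finset.mem_univ z), if_pos h]
      rw [this]
    · have h0 : (if b z then (1:ℝ) else 0) = 0 := if_neg h
      show (if b z then (1:ℝ) else 0) / _ + (1 / (S : ℝ)) * P b = _
      rw [h0, zero_div, zero_div]
  -- normalization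
  have hwsum : ∑ b, w b = 1 := by
    calc ∑ b, w b = ∑ b ∈ Fintype.piFinset (fun _ : Fin S => (Finset.univ : Finset Bool)),
            ∏ i, (if b i then γ else 1 - γ) := by
          rw [Fintype.piFinset_univ]
      _ = ∏ _i : Fin S, ∑ x : Bool, (if x then γ else 1 - γ) := by
          rw [Finset.prod_univ_sum]
      _ = 1 := by simp
  -- symmetry
  have hsym : ∀ j : Fin S, ∑ b, w b * ((if b j then (1:ℝ) else 0) / n b)
      = ∑ b, w b * ((if b z then (1:ℝ) else 0) / n b) := by
    intro j
    set σ := Equiv.swap z j with hσ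
    refine Fintype.sum_bijective (fun b : Fin S → Bool => b ∘ σ)
      (Equiv.arrowCongr σ.symm (Equiv.refl Bool)).bijective _ _ fun b => ?_
    show w b * ((if b j then (1:ℝ) else 0) / n b)
        = w (b ∘ σ) * ((if (b ∘ σ) z then (1:ℝ) else 0) / n (b ∘ σ))
    have h1 : w (b ∘ σ) = w b := by
      show ∏ i, (if b (σ i) then γ else 1 - γ) = ∏ i, (if b i then γ else 1 - γ)
      exact Equiv.prod_comp σ (fun i => if b i then γ else 1 - γ)
    have h2 : n (b ∘ σ) = n b := by
      show ∑ i, (if b (σ i) then (1:ℝ) else 0) = ∑ i, (if b i then (1:ℝ) else 0)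
      exact Equiv.sum_comp σ (fun i => if b i then (1:ℝ) else 0)
    have h3 : (b ∘ σ) z = b j := by
      simp [hσ, Function.comp, Equiv.swap_apply_left]
    rw [h1, h2, h3]
  have key : (S : ℝ) * ∑ b, w b * ((if b z then (1:ℝ) else 0) / n b)
      = 1 - ∑ b, w b * P b := by
    calc (S : ℝ) * ∑ b, w b * ((if b z then (1:ℝ) else 0) / n b)
        = ∑ _j : Fin S, ∑ b, w b * ((if b z then (1:ℝ) else 0) / n b) := by
          simp [Finset.sum_const, nsmul_eq_mul]
      _ = ∑ j : Fin S, ∑ b, w b * ((if b j then (1:ℝ) else 0) / n b) := by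
          exact (Finset.sum_congr rfl fun j _ => hsym j).symm
      _ = ∑ b, ∑ j : Fin S, w b * ((if b j then (1:ℝ) else 0) / n b) := Finset.sum_comm
      _ = ∑ b, w b * (1 - P b) := by
          refine Finset.sum_congr rfl fun b _ => ?_
          rw [← Finset.mul_sum]
          congr 1
          exact pointwise_sum b
      _ = 1 - ∑ b, w b * P b := by
          simp_rw [mul_sub, mul_one, Finset.sum_sub_distrib, hwsum]
  have hSne : (S : ℝ) ≠ 0 := Nat.cast_ne_zero.mpr hS.ne'
  calc ∑ b, w b * F b
      = ∑ b, (w b * ((if b z then (1:ℝ) else 0) / n b) + (1 / (S : ℝ)) * (w b * P b)) := by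
        refine Finset.sum_congr rfl fun b _ => ?_
        rw [hfirst b]; ring
    _ = ∑ b, w b * ((if b z then (1:ℝ) else 0) / n b)
          + (1 / (S : ℝ)) * ∑ b, w b * P b := by
        rw [Finset.sum_add_distrib, Finset.mul_sum]
    _ = 1 / (S : ℝ) := by
        field_simp at key ⊢
        linarith
end

section
/- For all real numbers δ, δ_E with 0 < δ < 1 and 0 < δ_E < 1: max{ (1−δ)/(1−δ·δ_E), 1/(1+δ_E) } < (1−δ·δ_E)/(1−δ·δ_E²). -/
/-- For all `0 < δ < 1` and `0 < δ_E < 1`: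
`max{(1−δ)/(1−δδ_E), 1/(1+δ_E)} < (1−δδ_E)/(1−δδ_E²)`. -/
theorem erasure_kg_strictly_suboptimal (δ δE : ℝ)
    (hδ0 : 0 < δ) (hδ1 : δ < 1) (hE0 : 0 < δE) (hE1 : δE < 1) :
    max ((1 - δ) / (1 - δ * δE)) (1 / (1 + δE))
      < (1 - δ * δE) / (1 - δ * δE ^ 2) := by
  have h1 : (0:ℝ) < 1 - δ * δE := by nlinarith
  have h2 : (0:ℝ) < 1 + δE := by linarith
  have h3 : (0:ℝ) < 1 - δ * δE ^ 2 := by nlinarith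
  apply max_lt
  · rw [div_lt_div_iff₀ h1 h3]; nlinarith [mul_pos hδ0 (mul_pos (sub_pos.mpr hE1) (sub_pos.mpr hE1))]
  · rw [div_lt_div_iff₀ h2 h3]; nlinarith
end
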